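/- Let n ≥ 1, let Λ_1, …, Λ_L be a partition of {1,…,n}, and let U be the HP-L circuit U = (⊗_{i∈Λ_L} H_i) ∏_{l=L−1}^{1} (CP_{Λ_l, Λ̄_l}(θ) ⊗_{i∈Λ_l} H_i), where Λ̄_l = {1,…,n} \ (Λ_1 ∪ ⋯ ∪ Λ_l) and CP applies controlled-phase gates CP_{jk}(θ_{jk}) between all pairs j ∈ Λ_l, k ∈ Λ̄_l. Then for computational basis states |b⟩ = |b_1⋯b_n⟩ and |b'⟩ = |b'_1⋯b'_n⟩, ⟨b'|U|b⟩ = 2^{−n/2} exp(i Σ_{j,k} θ̃_{jk} b'_j b_k), where θ̃_{jj} = π, θ̃_{jk} = θ_{jk} if qubit j receives its Hadamard in an earlier layer than qubit k, and θ̃_{jk} = 0 otherwise. In particular every matrix entry of U has modulus 2^{−n/2}. -/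

import Mathlib

/-!
Induct on the number of layers. After layers `1, …, m` the circuit is the Hadamard transform on
the qubits of those layers, multiplied entrywise by `exp (i ∑ θ_{jk} x_j b_k)` over the pairs
with `lay j ≤ m` and `lay j < lay k`. The Hadamards of layer `m + 1` act on coordinates that this
phase does not read, and the next controlled-phase block reads `x_k` only for qubits of later
layers, where the Hadamard part forces `x_k = b_k`; so it contributes exactly the new pairs. The
last layer completes `H^{⊗n}`, whose entries `2^{-n/2} (-1)^{b'·b}` give the diagonal `θ̃_{jj} = π`.
-/

/-- `⟨a|H|b⟩` for the single-qubit Hadamard gate. -/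
noncomputable def Hgate (a b : Bool) : ℂ :=
  (Real.sqrt 2 : ℂ)⁻¹ * (if a && b then -1 else 1)

/-- Bit value of a boolean, as a complex number. -/
def bitC (b : Bool) : ℂ := if b then 1 else 0

/-- Transversal Hadamard gates applied to the qubits in `S` (identity elsewhere). -/
noncomputable def HS (n : ℕ) (S : Finset (Fin n)) :
    Matrix (Fin n → Bool) (Fin n → Bool) ℂ :=
  fun x y => ∏ i : Fin n, if i ∈ S then Hgate (x i) (y i) else (if x i = y i then 1 else 0)

/-- Block of controlled-phase gates `CP_{jk}(θ_{jk})` between all pairs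
`j ∈ A`, `k ∈ B` (a diagonal matrix). -/
noncomputable def CPblock (n : ℕ) (A B : Finset (Fin n)) (θ : Fin n → Fin n → ℝ) :
    Matrix (Fin n → Bool) (Fin n → Bool) ℂ :=
  fun x y => if x = y then
      Complex.exp (Complex.I * ∑ j ∈ A, ∑ k ∈ B, (θ j k : ℂ) * bitC (x j) * bitC (x k))
    else 0

/-- The HP-L circuit
`U = (⊗_{i∈Λ_L} H_i) ∏_{l=L−1}^{1} (CP_{Λ_l, Λ̄_l}(θ) ⊗_{i∈Λ_l} H_i)`,
where `Λ̄_l = {i : l < lay i}` is the set of qubits whose Hadamard comes in a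
later layer. -/
noncomputable def hpCircuit (n L : ℕ) (Λ : ℕ → Finset (Fin n))
    (lay : Fin n → ℕ) (θ : Fin n → Fin n → ℝ) :
    Matrix (Fin n → Bool) (Fin n → Bool) ℂ :=
  HS n (Λ L) *
    (((List.range' 1 (L - 1)).reverse.map
      (fun l => CPblock n (Λ l) (Finset.univ.filter fun i => l < lay i) θ * HS n (Λ l))).prod)

open Finset Matrix

namespace Matrix

variable {ι R : Type*} [Fintype ι] [CommSemiring R]

theorem mul_hadamard_of_apply_ne_zero (M N E : Matrix ι ι R)
    (hE : ∀ x y b, M x y ≠ 0 → E y b = E x b) : M * (N ⊙ E) = (M * N) ⊙ E := by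
  ext x b
  simp only [mul_apply, hadamard_apply, Finset.sum_mul]
  refine Finset.sum_congr rfl fun y _ => ?_
  by_cases hxy : M x y = 0
  · simp [hxy]
  · rw [hE x y b hxy, mul_assoc]

variable {κ α : Type*} [Fintype κ] [DecidableEq κ] [Fintype α]

theorem mul_apply_eq_piecewise (S : Finset κ) (M N : Matrix (κ → α) (κ → α) R)
    (hM : ∀ x y i, i ∉ S → x i ≠ y i → M x y = 0)
    (hN : ∀ y b i, i ∈ S → y i ≠ b i → N y b = 0) (x b : κ → α) :
    (M * N) x b = M x (S.piecewise b x) * N (S.piecewise b x) b := by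
  rw [mul_apply, Finset.sum_eq_single (S.piecewise b x) _ (by simp)]
  intro y _ hy
  obtain ⟨i, hi⟩ := Function.ne_iff.1 hy
  by_cases hiS : i ∈ S
  · rw [hN y b i hiS (by simpa [hiS] using hi), mul_zero]
  · rw [hM x y i hiS (by simpa [hiS, eq_comm] using hi), zero_mul]

end Matrix

section Hadamard

variable {n : ℕ}

theorem HS_apply_eq_zero {S : Finset (Fin n)} {x y : Fin n → Bool} {i : Fin n}
    (hi : i ∉ S) (hxy : x i ≠ y i) : HS n S x y = 0 :=
  Finset.prod_eq_zero (mem_univ i) (by simp [hi, hxy])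

theorem HS_empty : HS n ∅ = 1 := by
  ext x y
  rcases eq_or_ne x y with rfl | hxy
  · simp [HS]
  · obtain ⟨i, hi⟩ := Function.ne_iff.1 hxy
    rw [one_apply_ne hxy, HS_apply_eq_zero (Finset.notMem_empty i) hi]

theorem HS_mul_HS {S T : Finset (Fin n)} (hST : Disjoint S T) : HS n S * HS n T = HS n (S ∪ T) := by
  ext x b
  rw [mul_apply_eq_piecewise S _ _ (fun _ _ _ => HS_apply_eq_zero)
    (fun _ _ _ hi => HS_apply_eq_zero (Finset.disjoint_left.1 hST hi)), HS, HS, HS,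
    ← Finset.prod_mul_distrib]
  refine Finset.prod_congr rfl fun i _ => ?_
  by_cases hiS : i ∈ S
  · simp [hiS, Finset.disjoint_left.1 hST hiS]
  · simp [hiS]

theorem Real.sqrt_pow {x : ℝ} (hx : 0 ≤ x) (n : ℕ) : Real.sqrt (x ^ n) = Real.sqrt x ^ n := by
  rw [← Real.sqrt_sq (pow_nonneg (Real.sqrt_nonneg x) n), ← pow_mul, mul_comm, pow_mul,
    Real.sq_sqrt hx]

theorem Hgate_eq_exp (a b : Bool) :
    Hgate a b = (Real.sqrt 2 : ℂ)⁻¹ * Complex.exp (Complex.I * (Real.pi * bitC a * bitC b)) := by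
  cases a <;> cases b <;> simp [Hgate, bitC, mul_comm Complex.I, Complex.exp_pi_mul_I]

theorem HS_univ_apply (x y : Fin n → Bool) :
    HS n univ x y = (Real.sqrt (2 ^ n) : ℂ)⁻¹ *
      Complex.exp (Complex.I * ∑ i, Real.pi * bitC (x i) * bitC (y i)) := by
  simp only [HS, mem_univ, if_true, Hgate_eq_exp, Finset.prod_mul_distrib, Finset.prod_const,
    card_univ, Fintype.card_fin, ← Complex.exp_sum, ← Finset.mul_sum]
  rw [Real.sqrt_pow zero_le_two, inv_pow]
  push_cast
  rfl

end Hadamard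

section Circuit

variable {n : ℕ} (lay : Fin n → ℕ) (θ : Fin n → Fin n → ℝ)

def cutPhase (m : ℕ) (x b : Fin n → Bool) : ℂ :=
  ∑ j, ∑ k, (if lay j ≤ m ∧ lay j < lay k then (θ j k : ℂ) else 0) * bitC (x j) * bitC (b k)

noncomputable def phaseMatrix (m : ℕ) : Matrix (Fin n → Bool) (Fin n → Bool) ℂ :=
  Matrix.of fun x b => Complex.exp (Complex.I * cutPhase lay θ m x b)

/-- Closed form of the first `m` layers `∏_{l=m}^{1} CP_{Λ_l, Λ̄_l}(θ) ⊗_{i∈Λ_l} H_i`: the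
controlled phases already applied read the output bit `x_j` of the control and, since `k` is not
yet Hadamard-transformed, the input bit `b_k` of the target. -/
noncomputable def hpPartial (m : ℕ) : Matrix (Fin n → Bool) (Fin n → Bool) ℂ :=
  HS n (univ.filter fun i => lay i ≤ m) ⊙ phaseMatrix lay θ m

theorem cutPhase_congr_left {m : ℕ} {x y : Fin n → Bool} (hxy : ∀ j, lay j ≤ m → x j = y j)
    (b : Fin n → Bool) : cutPhase lay θ m x b = cutPhase lay θ m y b := by
  refine Finset.sum_congr rfl fun j _ => Finset.sum_congr rfl fun k _ => ?_
  by_cases hj : lay j ≤ m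
  · rw [hxy j hj]
  · simp [hj]

theorem cutPhase_succ {m : ℕ} {x b : Fin n → Bool} (hxb : ∀ k, m + 1 < lay k → x k = b k) :
    cutPhase lay θ (m + 1) x b =
      ∑ j ∈ univ.filter (fun i => lay i = m + 1), ∑ k ∈ univ.filter (fun i => m + 1 < lay i),
        (θ j k : ℂ) * bitC (x j) * bitC (x k) + cutPhase lay θ m x b := by
  simp only [cutPhase, Finset.sum_filter, ← Finset.sum_add_distrib]
  refine Finset.sum_congr rfl fun j _ => ?_
  by_cases hj : lay j = m + 1
  · rw [if_pos hj, ← Finset.sum_add_distrib]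
    refine Finset.sum_congr rfl fun k _ => ?_
    by_cases hk : m + 1 < lay k
    · simp [hj, hk, hxb k hk]
    · simp [hj, hk]
  · rw [if_neg hj, zero_add]
    refine Finset.sum_congr rfl fun k _ => ?_
    by_cases hjm : lay j ≤ m
    · simp [hjm, show lay j ≤ m + 1 by omega]
    · simp [hjm, show ¬ lay j ≤ m + 1 by omega]

theorem CPblock_mul_apply (A B : Finset (Fin n)) (N : Matrix (Fin n → Bool) (Fin n → Bool) ℂ)
    (x y : Fin n → Bool) :
    (CPblock n A B θ * N) x y =
      Complex.exp (Complex.I * ∑ j ∈ A, ∑ k ∈ B, (θ j k : ℂ) * bitC (x j) * bitC (x k)) *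
        N x y := by
  simp [mul_apply, CPblock, ite_mul, Finset.sum_ite_eq]

theorem hpPartial_zero (hlay : ∀ i, 1 ≤ lay i) : hpPartial lay θ 0 = 1 := by
  have hempty : univ.filter (fun i => lay i ≤ 0) = ∅ :=
    Finset.filter_false_of_mem fun i _ => by have := hlay i; omega
  have hphase : ∀ x b, cutPhase lay θ 0 x b = 0 := fun x b =>
    Finset.sum_eq_zero fun j _ => Finset.sum_eq_zero fun k _ => by
      have := hlay j
      simp [show ¬ lay j ≤ 0 by omega]
  ext x b
  rw [hpPartial, hadamard_apply, hempty, HS_empty, phaseMatrix, of_apply, hphase]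
  simp

variable {lay} {Λ : ℕ → Finset (Fin n)} (hpart : ∀ i l, i ∈ Λ l ↔ lay i = l)
include hpart

theorem HS_mul_hpPartial (m : ℕ) :
    HS n (Λ (m + 1)) * hpPartial lay θ m =
      HS n (univ.filter fun i => lay i ≤ m + 1) ⊙ phaseMatrix lay θ m := by
  have hΛ : ∀ i, i ∈ Λ (m + 1) ↔ lay i = m + 1 := fun i => hpart i (m + 1)
  have hdisj : Disjoint (Λ (m + 1)) (univ.filter fun i => lay i ≤ m) := by
    rw [Finset.disjoint_left]
    intro i hi
    simp only [mem_filter, mem_univ, true_and, hΛ] at hi ⊢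
    omega
  have hunion :
      Λ (m + 1) ∪ univ.filter (fun i => lay i ≤ m) = univ.filter fun i => lay i ≤ m + 1 := by
    ext i
    simp only [mem_union, mem_filter, mem_univ, true_and, hΛ]
    omega
  rw [hpPartial, mul_hadamard_of_apply_ne_zero, HS_mul_HS hdisj, hunion]
  intro x y b hxy
  simp only [phaseMatrix, of_apply]
  rw [cutPhase_congr_left lay θ (fun j hj => ?_) b]
  by_contra hne
  exact hxy (HS_apply_eq_zero (by rw [hΛ]; omega) (Ne.symm hne))

theorem CPblock_mul_HS_hadamard_phaseMatrix (m : ℕ) :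
    CPblock n (Λ (m + 1)) (univ.filter fun i => m + 1 < lay i) θ *
        (HS n (univ.filter fun i => lay i ≤ m + 1) ⊙ phaseMatrix lay θ m) =
      hpPartial lay θ (m + 1) := by
  have hΛ : Λ (m + 1) = univ.filter fun i => lay i = m + 1 := by ext i; simp [hpart]
  ext x b
  rw [CPblock_mul_apply, hpPartial, hadamard_apply, hadamard_apply]
  by_cases hxb : ∀ k, m + 1 < lay k → x k = b k
  · simp only [phaseMatrix, of_apply]
    rw [cutPhase_succ lay θ hxb, hΛ, mul_add, Complex.exp_add]
    ring
  · push Not at hxb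
    obtain ⟨k, hk, hne⟩ := hxb
    rw [HS_apply_eq_zero (by simp; omega) hne]
    simp

omit hpart in
theorem sum_phase_eq_diag_add_cutPhase {m : ℕ} (hlay : ∀ k, lay k ≤ m + 1) (x b : Fin n → Bool) :
    ∑ j, ∑ k, (if j = k then (Real.pi : ℂ) else if lay j < lay k then (θ j k : ℂ) else 0) *
        bitC (x j) * bitC (b k) =
      ∑ i, Real.pi * bitC (x i) * bitC (b i) + cutPhase lay θ m x b := by
  rw [cutPhase, ← Finset.sum_add_distrib]
  refine Finset.sum_congr rfl fun j _ => ?_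
  rw [← Finset.sum_ite_eq_of_mem univ j (fun k => (Real.pi : ℂ) * bitC (x j) * bitC (b k))
    (mem_univ j), ← Finset.sum_add_distrib]
  refine Finset.sum_congr rfl fun k _ => ?_
  rcases eq_or_ne j k with rfl | hjk
  · simp
  · have := hlay k
    by_cases hjk' : lay j < lay k
    · simp [hjk, hjk', show lay j ≤ m by omega]
    · simp [hjk, hjk']

theorem prod_layers_eq_hpPartial (hlay : ∀ i, 1 ≤ lay i) (m : ℕ) :
    ((List.range' 1 m).reverse.map fun l =>
        CPblock n (Λ l) (univ.filter fun i => l < lay i) θ * HS n (Λ l)).prod =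
      hpPartial lay θ m := by
  induction m with
  | zero => exact (hpPartial_zero lay θ hlay).symm
  | succ m ih =>
    rw [List.range'_1_concat, List.reverse_concat, List.map_cons, List.prod_cons, ih,
      Nat.add_comm 1 m, Matrix.mul_assoc, HS_mul_hpPartial θ hpart, CPblock_mul_HS_hadamard_phaseMatrix θ hpart]

end Circuit

theorem hp_circuit_entry_general (n L : ℕ) (hL : 1 ≤ L)
    (Λ : ℕ → Finset (Fin n)) (lay : Fin n → ℕ) (θ : Fin n → Fin n → ℝ)
    (hlay : ∀ i : Fin n, 1 ≤ lay i ∧ lay i ≤ L)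
    (hpart : ∀ (i : Fin n) (l : ℕ), i ∈ Λ l ↔ lay i = l)
    (b b' : Fin n → Bool) :
    hpCircuit n L Λ lay θ b' b
      = (Real.sqrt (2 ^ n) : ℂ)⁻¹ *
        Complex.exp (Complex.I * ∑ j : Fin n, ∑ k : Fin n,
          (if j = k then ((Real.pi : ℝ) : ℂ)
            else if lay j < lay k then ((θ j k : ℝ) : ℂ) else 0) *
            bitC (b' j) * bitC (b k)) ∧
    ‖hpCircuit n L Λ lay θ b' b‖ = (Real.sqrt (2 ^ n))⁻¹ := by
  obtain ⟨m, rfl⟩ : ∃ m, L = m + 1 := ⟨L - 1, by omega⟩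
  have hU : hpCircuit n (m + 1) Λ lay θ b' b =
      HS n univ b' b * Complex.exp (Complex.I * cutPhase lay θ m b' b) := by
    rw [hpCircuit, Nat.add_sub_cancel, prod_layers_eq_hpPartial θ hpart fun i => (hlay i).1,
      HS_mul_hpPartial θ hpart, hadamard_apply, filter_true_of_mem fun i _ => (hlay i).2]
    rfl
  rw [HS_univ_apply, mul_assoc, ← Complex.exp_add, ← mul_add,
    ← sum_phase_eq_diag_add_cutPhase θ fun i => (hlay i).2] at hU
  refine ⟨hU, ?_⟩
  rw [hU, norm_mul, norm_inv, Complex.norm_real, Real.norm_of_nonneg (Real.sqrt_nonneg _),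
    Complex.norm_exp, Complex.I_mul_re, Complex.im_sum]
  simp only [Complex.im_sum]
  rw [Finset.sum_eq_zero fun j _ => Finset.sum_eq_zero fun k _ => ?_, neg_zero, Real.exp_zero,
    mul_one]
  cases b' j <;> cases b k <;> split_ifs <;> simp [bitC]

/-- Matrix entries of the HP-L circuit: for a partition `Λ_1, …, Λ_L` of the
qubits (`lay i` is the layer of qubit `i`),
`⟨b'|U|b⟩ = 2^{−n/2} exp(i Σ_{j,k} θ̃_{jk} b'_j b_k)` where `θ̃_{jj} = π`,
`θ̃_{jk} = θ_{jk}` if `lay j < lay k`, and `θ̃_{jk} = 0` otherwise.  In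
particular every entry has modulus `2^{−n/2}`. -/
theorem hp_circuit_entry (n L : ℕ) (hn : 1 ≤ n) (hL : 1 ≤ L)
    (Λ : ℕ → Finset (Fin n)) (lay : Fin n → ℕ) (θ : Fin n → Fin n → ℝ)
    (hlay : ∀ i : Fin n, 1 ≤ lay i ∧ lay i ≤ L)
    (hpart : ∀ (i : Fin n) (l : ℕ), i ∈ Λ l ↔ lay i = l)
    (b b' : Fin n → Bool) :
    hpCircuit n L Λ lay θ b' b
      = (Real.sqrt (2 ^ n) : ℂ)⁻¹ *
        Complex.exp (Complex.I * ∑ j : Fin n, ∑ k : Fin n,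
          (if j = k then ((Real.pi : ℝ) : ℂ)
            else if lay j < lay k then ((θ j k : ℝ) : ℂ) else 0) *
            bitC (b' j) * bitC (b k)) ∧
    ‖hpCircuit n L Λ lay θ b' b‖ = (Real.sqrt (2 ^ n))⁻¹ :=
  hp_circuit_entry_general n L hL Λ lay θ hlay hpart b b'
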